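/- Closure under classical substitutions: for every set Γ ∪ {φ} of formulas of the atom-free team language and every classical substitution σ, if Γ ⊨ φ then {σ(γ) : γ ∈ Γ} ⊨ σ(φ). -/
import Mathlib


/-- Formulas of full propositional team logic (FPT), with propositional
variables indexed by a type `V`. -/
inductive PTForm (V : Type) : Type where
  | pos : V → PTForm V
  | neg : V → PTForm V
  | bot : PTForm V
  | ne : PTForm V
  | dep : List V → V → PTForm V
  | indep : List V → List V → PTForm V
  | incl : List V → List V → PTForm V
  | and : PTForm V → PTForm V → PTForm V
  | tensor : PTForm V → PTForm V → PTForm V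
  | nsor : PTForm V → PTForm V → PTForm V
  | bor : PTForm V → PTForm V → PTForm V

/-- Team semantics of full propositional team logic.  A valuation is a
function `V → Bool` and a team is a set of valuations. -/
def PTSat {V : Type} (X : Set (V → Bool)) : PTForm V → Prop
  | .pos i => ∀ s ∈ X, s i = true
  | .neg i => ∀ s ∈ X, s i = false
  | .bot => X = ∅
  | .ne => X ≠ ∅
  | .dep xs y => ∀ s ∈ X, ∀ s' ∈ X, (∀ i ∈ xs, s i = s' i) → s y = s' y
  | .indep xs ys =>
      ∀ s ∈ X, ∀ s' ∈ X, ∃ s'' ∈ X,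
        (∀ i ∈ xs, s'' i = s i) ∧ (∀ j ∈ ys, s'' j = s' j)
  | .incl xs ys => ∀ s ∈ X, ∃ s' ∈ X, ∀ p ∈ List.zip xs ys, s p.1 = s' p.2
  | .and φ ψ => PTSat X φ ∧ PTSat X ψ
  | .tensor φ ψ => ∃ Y Z, X = Y ∪ Z ∧ PTSat Y φ ∧ PTSat Z ψ
  | .nsor φ ψ =>
      X = ∅ ∨ ∃ Y Z, X = Y ∪ Z ∧ Y.Nonempty ∧ Z.Nonempty ∧ PTSat Y φ ∧ PTSat Z ψ
  | .bor φ ψ => PTSat X φ ∨ PTSat X ψ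

/-- The set of propositional variables occurring in a formula. -/
def PTForm.vars {V : Type} : PTForm V → Set V
  | .pos i => {i}
  | .neg i => {i}
  | .bot => ∅
  | .ne => ∅
  | .dep xs y => {i | i ∈ xs} ∪ {y}
  | .indep xs ys => {i | i ∈ xs} ∪ {j | j ∈ ys}
  | .incl xs ys => {i | i ∈ xs} ∪ {j | j ∈ ys}
  | .and φ ψ => φ.vars ∪ ψ.vars
  | .tensor φ ψ => φ.vars ∪ ψ.vars
  | .nsor φ ψ => φ.vars ∪ ψ.vars
  | .bor φ ψ => φ.vars ∪ ψ.vars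

/-- The formula does not contain the atom NE. -/
def PTForm.NEfree {V : Type} : PTForm V → Prop
  | .ne => False
  | .and φ ψ => φ.NEfree ∧ ψ.NEfree
  | .tensor φ ψ => φ.NEfree ∧ ψ.NEfree
  | .nsor φ ψ => φ.NEfree ∧ ψ.NEfree
  | .bor φ ψ => φ.NEfree ∧ ψ.NEfree
  | _ => True

/-- Classical formulas: built from `pᵢ`, `¬pᵢ`, `⊥` using only `∧` and `⊗`. -/
inductive IsClassical {V : Type} : PTForm V → Prop where
  | pos (i : V) : IsClassical (.pos i)
  | neg (i : V) : IsClassical (.neg i)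
  | bot : IsClassical .bot
  | and : ∀ {φ ψ}, IsClassical φ → IsClassical ψ → IsClassical (.and φ ψ)
  | tensor : ∀ {φ ψ}, IsClassical φ → IsClassical ψ → IsClassical (.tensor φ ψ)

/-- The language of strong propositional team logic PT⁺:
atoms `pᵢ`, `¬pᵢ`, `⊥`, `NE` and connectives `∧`, `⊗`, `∨`. -/
inductive IsPTPlus {V : Type} : PTForm V → Prop where
  | pos (i : V) : IsPTPlus (.pos i)
  | neg (i : V) : IsPTPlus (.neg i)
  | bot : IsPTPlus .bot
  | ne : IsPTPlus .ne
  | and : ∀ {φ ψ}, IsPTPlus φ → IsPTPlus ψ → IsPTPlus (.and φ ψ)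
  | tensor : ∀ {φ ψ}, IsPTPlus φ → IsPTPlus ψ → IsPTPlus (.tensor φ ψ)
  | bor : ∀ {φ ψ}, IsPTPlus φ → IsPTPlus ψ → IsPTPlus (.bor φ ψ)

/-- The language of propositional team logic PT:
atoms `pᵢ`, `¬pᵢ`, `⊥` and connectives `∧`, `⊛`, `∨`. -/
inductive IsPT {V : Type} : PTForm V → Prop where
  | pos (i : V) : IsPT (.pos i)
  | neg (i : V) : IsPT (.neg i)
  | bot : IsPT .bot
  | and : ∀ {φ ψ}, IsPT φ → IsPT ψ → IsPT (.and φ ψ)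
  | nsor : ∀ {φ ψ}, IsPT φ → IsPT ψ → IsPT (.nsor φ ψ)
  | bor : ∀ {φ ψ}, IsPT φ → IsPT ψ → IsPT (.bor φ ψ)

/-- The language of propositional union closed logic PU:
atoms `pᵢ`, `¬pᵢ`, `⊥` and connectives `∧`, `⊗`, `⊛`. -/
inductive IsPU {V : Type} : PTForm V → Prop where
  | pos (i : V) : IsPU (.pos i)
  | neg (i : V) : IsPU (.neg i)
  | bot : IsPU .bot
  | and : ∀ {φ ψ}, IsPU φ → IsPU ψ → IsPU (.and φ ψ)
  | tensor : ∀ {φ ψ}, IsPU φ → IsPU ψ → IsPU (.tensor φ ψ)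
  | nsor : ∀ {φ ψ}, IsPU φ → IsPU ψ → IsPU (.nsor φ ψ)

/-- The language of strong propositional union closed logic PU⁺:
atoms `pᵢ`, `¬pᵢ`, `⊥`, `NE` and connectives `∧`, `⊗`, `⊛`. -/
inductive IsPUPlus {V : Type} : PTForm V → Prop where
  | pos (i : V) : IsPUPlus (.pos i)
  | neg (i : V) : IsPUPlus (.neg i)
  | bot : IsPUPlus .bot
  | ne : IsPUPlus .ne
  | and : ∀ {φ ψ}, IsPUPlus φ → IsPUPlus ψ → IsPUPlus (.and φ ψ)
  | tensor : ∀ {φ ψ}, IsPUPlus φ → IsPUPlus ψ → IsPUPlus (.tensor φ ψ)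
  | nsor : ∀ {φ ψ}, IsPUPlus φ → IsPUPlus ψ → IsPUPlus (.nsor φ ψ)

/-- The atom-free team language: atoms `pᵢ`, `¬pᵢ`, `⊥`, `NE` and
connectives `∧`, `⊗`, `⊛`, `∨` (no dependence/independence/inclusion atoms). -/
inductive IsAtomFree {V : Type} : PTForm V → Prop where
  | pos (i : V) : IsAtomFree (.pos i)
  | neg (i : V) : IsAtomFree (.neg i)
  | bot : IsAtomFree .bot
  | ne : IsAtomFree .ne
  | and : ∀ {φ ψ}, IsAtomFree φ → IsAtomFree ψ → IsAtomFree (.and φ ψ)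
  | tensor : ∀ {φ ψ}, IsAtomFree φ → IsAtomFree ψ → IsAtomFree (.tensor φ ψ)
  | nsor : ∀ {φ ψ}, IsAtomFree φ → IsAtomFree ψ → IsAtomFree (.nsor φ ψ)
  | bor : ∀ {φ ψ}, IsAtomFree φ → IsAtomFree ψ → IsAtomFree (.bor φ ψ)

/-- The literal `pᵢ^{s(i)}`, i.e. `pᵢ` if `s i = 1` and `¬pᵢ` if `s i = 0`. -/
def PTlit {V : Type} (s : V → Bool) (i : V) : PTForm V :=
  if s i then .pos i else .neg i

/-- Conjunction of a nonempty list headed by the first argument. -/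
def PTandAux {V : Type} : PTForm V → List (PTForm V) → PTForm V
  | φ, [] => φ
  | φ, ψ :: l => .and φ (PTandAux ψ l)

/-- Conjunction of a list of formulas (only used on nonempty lists). -/
def PTandList {V : Type} : List (PTForm V) → PTForm V
  | [] => .bot
  | φ :: l => PTandAux φ l

/-- The formula `p_{i₁}^{s(i₁)} ∧ … ∧ p_{iₙ}^{s(iₙ)}` describing the
valuation `s`, where `{i₁, …, iₙ}` enumerates all of `V`. -/
noncomputable def PTdescr {V : Type} [Fintype V] (s : V → Bool) : PTForm V :=
  PTandList ((Finset.univ : Finset V).toList.map (PTlit s))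

/-- Tensor disjunction `⊗` of a list of formulas; the empty tensor
disjunction is `⊥`. -/
def PTtensorList {V : Type} (l : List (PTForm V)) : PTForm V :=
  l.foldr PTForm.tensor PTForm.bot

/-- Nonempty disjunction `⊛` of a nonempty list headed by the first argument. -/
def PTnsorAux {V : Type} : PTForm V → List (PTForm V) → PTForm V
  | φ, [] => φ
  | φ, ψ :: l => .nsor φ (PTnsorAux ψ l)

/-- Nonempty disjunction `⊛` of a list of formulas; the empty nonempty
disjunction is `⊥`. -/
def PTnsorList {V : Type} : List (PTForm V) → PTForm V
  | [] => .bot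
  | φ :: l => PTnsorAux φ l

/-- Boolean disjunction `∨` of a list of formulas; the empty Boolean
disjunction is `⊥ ∧ NE`. -/
def PTborList {V : Type} (l : List (PTForm V)) : PTForm V :=
  l.foldr PTForm.bor (PTForm.and PTForm.bot PTForm.ne)

/-- The formula `Θ_X := ⊗_{s∈X} (p_{i₁}^{s(i₁)} ∧ … ∧ p_{iₙ}^{s(iₙ)})`. -/
noncomputable def PTtheta {V : Type} [Fintype V] (X : Finset (V → Bool)) : PTForm V :=
  PTtensorList (X.toList.map PTdescr)

/-- The formula `Θ*_X := ⊗_{s∈X} (p_{i₁}^{s(i₁)} ∧ … ∧ p_{iₙ}^{s(iₙ)} ∧ NE)`. -/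
noncomputable def PTthetaStar {V : Type} [Fintype V] (X : Finset (V → Bool)) : PTForm V :=
  PTtensorList (X.toList.map (fun s => .and (PTdescr s) .ne))

/-- The formula `Θ**_X := ⊛_{s∈X} (p_{i₁}^{s(i₁)} ∧ … ∧ p_{iₙ}^{s(iₙ)})`. -/
noncomputable def PTthetaSS {V : Type} [Fintype V] (X : Finset (V → Bool)) : PTForm V :=
  PTnsorList (X.toList.map PTdescr)

/-- Logical consequence: every team satisfying all formulas of `Γ`
satisfies `φ`. -/
def PTEntails {V : Type} (Γ : Set (PTForm V)) (φ : PTForm V) : Prop :=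
  ∀ X : Set (V → Bool), (∀ ψ ∈ Γ, PTSat X ψ) → PTSat X φ

/-- A team property is flat if a team is in it iff all its singleton
subteams are. -/
def IsFlat {V : Type} (P : Set (Set (V → Bool))) : Prop :=
  ∀ X : Set (V → Bool), X ∈ P ↔ ∀ s ∈ X, ({s} : Set (V → Bool)) ∈ P

/-- A team property is union closed if it is closed under unions of
nonempty subfamilies. -/
def IsUnionClosed {V : Type} (P : Set (Set (V → Bool))) : Prop :=
  ∀ 𝒳 ⊆ P, 𝒳.Nonempty → ⋃₀ 𝒳 ∈ P

/-- The syntactic De Morgan negation of a classical formula. -/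
def PTdeMorgan : PTForm ℕ → PTForm ℕ
  | .pos i => .neg i
  | .neg i => .pos i
  | .bot => .tensor (.pos 0) (.neg 0)
  | .and φ ψ => .tensor (PTdeMorgan φ) (PTdeMorgan ψ)
  | .tensor φ ψ => .and (PTdeMorgan φ) (PTdeMorgan ψ)
  | φ => φ

/-- Application of a substitution `σ` (assigning a formula to each
propositional variable) to a formula of the atom-free team language. -/
def PTsubst (σ : ℕ → PTForm ℕ) : PTForm ℕ → PTForm ℕ
  | .pos i => σ i
  | .neg i => PTdeMorgan (σ i)
  | .and φ ψ => .and (PTsubst σ φ) (PTsubst σ ψ)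
  | .tensor φ ψ => .tensor (PTsubst σ φ) (PTsubst σ ψ)
  | .nsor φ ψ => .nsor (PTsubst σ φ) (PTsubst σ ψ)
  | .bor φ ψ => .bor (PTsubst σ φ) (PTsubst σ ψ)
  | φ => φ

open Classical in
/-- The valuation `s_σ`, with `s_σ(i) = 1` iff `{s} ⊨ σ(pᵢ)`. -/
noncomputable def PTvalSubst (σ : ℕ → PTForm ℕ) (s : ℕ → Bool) : ℕ → Bool :=
  fun i => if PTSat {s} (σ i) then true else false

lemma PTdeMorgan_classical : ∀ {α : PTForm ℕ}, IsClassical α → IsClassical (PTdeMorgan α) := by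
  intro α h
  induction h with
  | pos i => exact .neg i
  | neg i => exact .pos i
  | bot => exact .tensor (.pos 0) (.neg 0)
  | and _ _ ih1 ih2 => exact .tensor ih1 ih2
  | tensor _ _ ih1 ih2 => exact .and ih1 ih2

lemma PTempty_classical {α : PTForm ℕ} (h : IsClassical α) :
    PTSat (∅ : Set (ℕ → Bool)) α := by
  induction h with
  | pos i => intro s hs; exact absurd hs (Set.notMem_empty s)
  | neg i => intro s hs; exact absurd hs (Set.notMem_empty s)
  | bot => rfl
  | and _ _ ih1 ih2 => exact ⟨ih1, ih2⟩
  | tensor _ _ ih1 ih2 => exact ⟨∅, ∅, by simp, ih1, ih2⟩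

lemma PTsingleton_tensor {γ δ : PTForm ℕ} (hγ : IsClassical γ) (hδ : IsClassical δ)
    (s : ℕ → Bool) :
    PTSat {s} (PTForm.tensor γ δ) ↔ PTSat {s} γ ∨ PTSat {s} δ := by
  constructor
  · rintro ⟨Y, Z, hYZ, hY, hZ⟩
    rcases (Set.subset_singleton_iff_eq.mp (hYZ ▸ Set.subset_union_left)) with hY0 | hY1
    · right
      have hZ1 : Z = {s} := by
        apply Set.eq_of_subset_of_subset (hYZ ▸ Set.subset_union_right)
        intro t ht
        rw [Set.mem_singleton_iff] at ht
        rw [ht]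
        have hmem : s ∈ Y ∪ Z := hYZ ▸ rfl
        rcases hmem with h | h
        · exact absurd h (by simp [hY0])
        · exact h
      exact hZ1 ▸ hZ
    · left; exact hY1 ▸ hY
  · rintro (h | h)
    · exact ⟨{s}, ∅, by simp, h, PTempty_classical hδ⟩
    · exact ⟨∅, {s}, by simp, PTempty_classical hγ, h⟩

lemma PTsingleton_deMorgan {α : PTForm ℕ} (h : IsClassical α) (s : ℕ → Bool) :
    PTSat {s} (PTdeMorgan α) ↔ ¬ PTSat {s} α := by
  induction h with
  | pos i => simp [PTdeMorgan, PTSat]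
  | neg i => simp [PTdeMorgan, PTSat]
  | bot =>
    show PTSat {s} (PTForm.tensor (.pos 0) (.neg 0)) ↔ ¬ ({s} = (∅ : Set (ℕ → Bool)))
    rw [PTsingleton_tensor (.pos 0) (.neg 0)]
    simp only [Set.singleton_ne_empty, not_false_iff, iff_true]
    by_cases hs : s 0 = true
    · left; intro t ht; simp only [Set.mem_singleton_iff] at ht; subst ht; exact hs
    · right; intro t ht; simp only [Set.mem_singleton_iff] at ht; subst ht
      simpa using hs
  | @and φ ψ h1 h2 ih1 ih2 =>
    show PTSat {s} (PTForm.tensor (PTdeMorgan φ) (PTdeMorgan ψ)) ↔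
      ¬ (PTSat {s} φ ∧ PTSat {s} ψ)
    rw [PTsingleton_tensor (PTdeMorgan_classical h1) (PTdeMorgan_classical h2), ih1, ih2]
    tauto
  | @tensor φ ψ h1 h2 ih1 ih2 =>
    show PTSat {s} (PTdeMorgan φ) ∧ PTSat {s} (PTdeMorgan ψ) ↔ _
    rw [ih1, ih2, PTsingleton_tensor h1 h2]
    tauto

lemma PTclassical_flat {α : PTForm ℕ} (h : IsClassical α) :
    ∀ X : Set (ℕ → Bool), PTSat X α ↔ ∀ s ∈ X, PTSat {s} α := by
  induction h with
  | pos i => intro X; simp [PTSat]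
  | neg i => intro X; simp [PTSat]
  | bot =>
    intro X
    constructor
    · rintro rfl; intro s hs; exact absurd hs (Set.notMem_empty s)
    · intro h
      by_contra hne
      obtain ⟨s, hs⟩ := Set.nonempty_iff_ne_empty.mpr hne
      exact Set.singleton_ne_empty s (h s hs)
  | @and φ ψ h1 h2 ih1 ih2 =>
    intro X
    show PTSat X φ ∧ PTSat X ψ ↔ ∀ s ∈ X, PTSat {s} φ ∧ PTSat {s} ψ
    rw [ih1, ih2]
    constructor
    · rintro ⟨a, b⟩ s hs; exact ⟨a s hs, b s hs⟩
    · intro h; exact ⟨fun s hs => (h s hs).1, fun s hs => (h s hs).2⟩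
  | @tensor φ ψ h1 h2 ih1 ih2 =>
    intro X
    constructor
    · rintro ⟨Y, Z, rfl, hY, hZ⟩ s hs
      rw [PTsingleton_tensor h1 h2]
      rcases hs with hs | hs
      · left; exact (ih1 Y).mp hY s hs
      · right; exact (ih2 Z).mp hZ s hs
    · intro h
      refine ⟨{s ∈ X | PTSat {s} φ}, {s ∈ X | PTSat {s} ψ}, ?_, ?_, ?_⟩
      · ext s
        simp only [Set.mem_union, Set.mem_setOf_eq]
        constructor
        · intro hs
          have := (PTsingleton_tensor h1 h2 s).mp (h s hs)
          tauto
        · rintro (⟨hs, _⟩ | ⟨hs, _⟩) <;> exact hs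
      · exact (ih1 _).mpr (fun s hs => hs.2)
      · exact (ih2 _).mpr (fun s hs => hs.2)

lemma PTvalSubst_eq_true {σ : ℕ → PTForm ℕ} {s : ℕ → Bool} {i : ℕ} :
    PTvalSubst σ s i = true ↔ PTSat {s} (σ i) := by
  simp [PTvalSubst]

lemma PTvalSubst_eq_false {σ : ℕ → PTForm ℕ} {s : ℕ → Bool} {i : ℕ} :
    PTvalSubst σ s i = false ↔ ¬ PTSat {s} (σ i) := by
  simp [PTvalSubst]

lemma PTsubst_sat (σ : ℕ → PTForm ℕ) (hσ : ∀ i, IsClassical (σ i))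
    {ψ : PTForm ℕ} (hψ : IsAtomFree ψ) :
    ∀ X : Set (ℕ → Bool),
      PTSat X (PTsubst σ ψ) ↔ PTSat (PTvalSubst σ '' X) ψ := by
  induction hψ with
  | pos i =>
    intro X
    show PTSat X (σ i) ↔ ∀ t ∈ PTvalSubst σ '' X, t i = true
    rw [PTclassical_flat (hσ i)]
    constructor
    · rintro h t ⟨s, hs, rfl⟩
      exact PTvalSubst_eq_true.mpr (h s hs)
    · intro h s hs
      exact PTvalSubst_eq_true.mp (h _ ⟨s, hs, rfl⟩)
  | neg i =>
    intro X
    show PTSat X (PTdeMorgan (σ i)) ↔ ∀ t ∈ PTvalSubst σ '' X, t i = false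
    rw [PTclassical_flat (PTdeMorgan_classical (hσ i))]
    constructor
    · rintro h t ⟨s, hs, rfl⟩
      exact PTvalSubst_eq_false.mpr ((PTsingleton_deMorgan (hσ i) s).mp (h s hs))
    · intro h s hs
      exact (PTsingleton_deMorgan (hσ i) s).mpr
        (PTvalSubst_eq_false.mp (h _ ⟨s, hs, rfl⟩))
  | bot =>
    intro X
    show X = ∅ ↔ PTvalSubst σ '' X = ∅
    simp [Set.image_eq_empty]
  | ne =>
    intro X
    show X ≠ ∅ ↔ PTvalSubst σ '' X ≠ ∅
    simp [Set.image_eq_empty]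
  | @and φ ψ h1 h2 ih1 ih2 =>
    intro X
    show PTSat X (PTsubst σ φ) ∧ PTSat X (PTsubst σ ψ) ↔ _ ∧ _
    rw [ih1 X, ih2 X]
  | @tensor φ ψ h1 h2 ih1 ih2 =>
    intro X
    constructor
    · rintro ⟨Y, Z, rfl, hY, hZ⟩
      exact ⟨PTvalSubst σ '' Y, PTvalSubst σ '' Z, Set.image_union _ _ _,
        (ih1 Y).mp hY, (ih2 Z).mp hZ⟩
    · rintro ⟨Y', Z', hX, hY', hZ'⟩
      refine ⟨X ∩ PTvalSubst σ ⁻¹' Y', X ∩ PTvalSubst σ ⁻¹' Z', ?_, ?_, ?_⟩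
      · ext s
        simp only [Set.mem_union, Set.mem_inter_iff, Set.mem_preimage]
        constructor
        · intro hs
          have : PTvalSubst σ s ∈ Y' ∪ Z' := hX ▸ ⟨s, hs, rfl⟩
          rcases this with h | h
          · exact Or.inl ⟨hs, h⟩
          · exact Or.inr ⟨hs, h⟩
        · rintro (⟨hs, _⟩ | ⟨hs, _⟩) <;> exact hs
      · rw [ih1]
        have himg : PTvalSubst σ '' (X ∩ PTvalSubst σ ⁻¹' Y') = Y' := by
          apply Set.eq_of_subset_of_subset
          · rintro t ⟨s, ⟨_, hs2⟩, rfl⟩; exact hs2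
          · intro t ht
            have : t ∈ PTvalSubst σ '' X := hX ▸ Set.mem_union_left _ ht
            obtain ⟨s, hs, rfl⟩ := this
            exact ⟨s, ⟨hs, ht⟩, rfl⟩
        rw [himg]; exact hY'
      · rw [ih2]
        have himg : PTvalSubst σ '' (X ∩ PTvalSubst σ ⁻¹' Z') = Z' := by
          apply Set.eq_of_subset_of_subset
          · rintro t ⟨s, ⟨_, hs2⟩, rfl⟩; exact hs2
          · intro t ht
            have : t ∈ PTvalSubst σ '' X := hX ▸ Set.mem_union_right _ ht
            obtain ⟨s, hs, rfl⟩ := this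
            exact ⟨s, ⟨hs, ht⟩, rfl⟩
        rw [himg]; exact hZ'
  | @nsor φ ψ h1 h2 ih1 ih2 =>
    intro X
    constructor
    · rintro (rfl | ⟨Y, Z, rfl, hYne, hZne, hY, hZ⟩)
      · left; simp
      · right
        exact ⟨PTvalSubst σ '' Y, PTvalSubst σ '' Z, Set.image_union _ _ _,
          hYne.image _, hZne.image _, (ih1 Y).mp hY, (ih2 Z).mp hZ⟩
    · rintro (hemp | ⟨Y', Z', hX, hY'ne, hZ'ne, hY', hZ'⟩)
      · left; exact Set.image_eq_empty.mp hemp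
      · right
        have himgY : PTvalSubst σ '' (X ∩ PTvalSubst σ ⁻¹' Y') = Y' := by
          apply Set.eq_of_subset_of_subset
          · rintro t ⟨s, ⟨_, hs2⟩, rfl⟩; exact hs2
          · intro t ht
            have : t ∈ PTvalSubst σ '' X := hX ▸ Set.mem_union_left _ ht
            obtain ⟨s, hs, rfl⟩ := this
            exact ⟨s, ⟨hs, ht⟩, rfl⟩
        have himgZ : PTvalSubst σ '' (X ∩ PTvalSubst σ ⁻¹' Z') = Z' := by
          apply Set.eq_of_subset_of_subset
          · rintro t ⟨s, ⟨_, hs2⟩, rfl⟩; exact hs2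
          · intro t ht
            have : t ∈ PTvalSubst σ '' X := hX ▸ Set.mem_union_right _ ht
            obtain ⟨s, hs, rfl⟩ := this
            exact ⟨s, ⟨hs, ht⟩, rfl⟩
        refine ⟨X ∩ PTvalSubst σ ⁻¹' Y', X ∩ PTvalSubst σ ⁻¹' Z', ?_, ?_, ?_, ?_, ?_⟩
        · ext s
          simp only [Set.mem_union, Set.mem_inter_iff, Set.mem_preimage]
          constructor
          · intro hs
            have : PTvalSubst σ s ∈ Y' ∪ Z' := hX ▸ ⟨s, hs, rfl⟩
            rcases this with h | h
            · exact Or.inl ⟨hs, h⟩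
            · exact Or.inr ⟨hs, h⟩
          · rintro (⟨hs, _⟩ | ⟨hs, _⟩) <;> exact hs
        · rw [← Set.image_nonempty (f := PTvalSubst σ), himgY]; exact hY'ne
        · rw [← Set.image_nonempty (f := PTvalSubst σ), himgZ]; exact hZ'ne
        · rw [ih1, himgY]; exact hY'
        · rw [ih2, himgZ]; exact hZ'
  | @bor φ ψ h1 h2 ih1 ih2 =>
    intro X
    show PTSat X (PTsubst σ φ) ∨ PTSat X (PTsubst σ ψ) ↔ _ ∨ _
    rw [ih1 X, ih2 X]

/-- **Closure under classical substitutions.**  If `Γ ⊨ φ` for a set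
`Γ ∪ {φ}` of formulas of the atom-free team language and `σ` is a classical
substitution, then `{σ(γ) : γ ∈ Γ} ⊨ σ(φ)`. -/
theorem closed_under_classical_substitutions (σ : ℕ → PTForm ℕ)
    (hσ : ∀ i, IsClassical (σ i)) (Γ : Set (PTForm ℕ)) (φ : PTForm ℕ)
    (hΓ : ∀ γ ∈ Γ, IsAtomFree γ) (hφ : IsAtomFree φ)
    (h : PTEntails Γ φ) :
    PTEntails (PTsubst σ '' Γ) (PTsubst σ φ) := by
  intro X hX
  rw [PTsubst_sat σ hσ hφ X]
  apply h
  intro γ hγ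
  rw [← PTsubst_sat σ hσ (hΓ γ hγ) X]
  exact hX _ ⟨γ, hγ, rfl⟩
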